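/- Let T1, T2, T3 be proper (2,3)-poles Ti(Bi,Ci), and let W(D1,D2,D3) be the (3,3,3)-pole consisting of a single vertex w with three dangling edges together with three isolated edges, each isolated edge contributing one semiedge to two different 3-connectors. Join Ci to Di for each i, obtaining the (2,2,2)-pole M(B1,B2,B3) = TTT(T1,T2,T3). Then Col(M) ⊆ Col(V4), where V4 is the (2,2,2)-pole consisting of a vertex v with its three neighbours u1,u2,u3 each carrying two dangling edges; and if T1, T2, T3 are all perfect then Col(M) = Col(V4). In particular TTT(T1,T2,T3) is a proper (2,2,2)-pole. -/
import Mathlib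


/-- The Klein four-group `Z₂ × Z₂`; Tait colourings use its three nonzero
elements as colours. -/
abbrev Klein : Type := ZMod 2 × ZMod 2

/-- The colouring set of a 5-pole, as a predicate on the colours of its five
semiedges. -/
abbrev Pred5 : Type := Klein → Klein → Klein → Klein → Klein → Prop

/-- The colouring set of a 6-pole, as a predicate on the colours of its six
semiedges. -/
abbrev Pred6 : Type := Klein → Klein → Klein → Klein → Klein → Klein → Prop

/-- The defining property of colourings `(i₁,i₂,o₁,o₂,r)` of a negator
`N(I,O,r)`: all colours are nonzero and exactly one of the flows through
`I = {i₁,i₂}` and `O = {o₁,o₂}` is zero, the nonzero one being equal to the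
colour of the residual semiedge `r`. -/
def NegC (i1 i2 o1 o2 r : Klein) : Prop :=
  i1 ≠ 0 ∧ i2 ≠ 0 ∧ o1 ≠ 0 ∧ o2 ≠ 0 ∧ r ≠ 0 ∧
    ((i1 + i2 = 0 ∧ o1 + o2 ≠ 0 ∧ o1 + o2 = r) ∨
     (o1 + o2 = 0 ∧ i1 + i2 ≠ 0 ∧ i1 + i2 = r))

/-- `N` is (the colouring set of) a negator `N(I,O,r)`. -/
def IsNegator (N : Pred5) : Prop :=
  ∀ i1 i2 o1 o2 r, N i1 i2 o1 o2 r → NegC i1 i2 o1 o2 r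

/-- `N` is a perfect negator: its colouring set is the full set `NegC`. -/
def IsPerfectNegator (N : Pred5) : Prop :=
  ∀ i1 i2 o1 o2 r, N i1 i2 o1 o2 r ↔ NegC i1 i2 o1 o2 r

/-- The defining property of colourings `(b₁,b₂,c₁,c₂,c₃)` of a proper
`(2,3)`-pole `T(B,C)`: the flows through `B` and `C` agree and are nonzero. -/
def P23C (b1 b2 c1 c2 c3 : Klein) : Prop :=
  b1 ≠ 0 ∧ b2 ≠ 0 ∧ c1 ≠ 0 ∧ c2 ≠ 0 ∧ c3 ≠ 0 ∧
    b1 + b2 = c1 + c2 + c3 ∧ b1 + b2 ≠ 0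

/-- `T` is (the colouring set of) a proper `(2,3)`-pole. -/
def IsProper23 (T : Pred5) : Prop :=
  ∀ b1 b2 c1 c2 c3, T b1 b2 c1 c2 c3 → P23C b1 b2 c1 c2 c3

/-- `T` is a perfect proper `(2,3)`-pole: its colouring set is all of `P23C`. -/
def IsPerfect23 (T : Pred5) : Prop :=
  ∀ b1 b2 c1 c2 c3, T b1 b2 c1 c2 c3 ↔ P23C b1 b2 c1 c2 c3

/-- The colouring set of the path `P₂` of length two with dangling edges
retained, the semiedges listed as (two at one endvertex, two at the other
endvertex, one at the middle vertex). -/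
def P2C (a b c d e : Klein) : Prop :=
  a ≠ 0 ∧ b ≠ 0 ∧ c ≠ 0 ∧ d ≠ 0 ∧ e ≠ 0 ∧ a ≠ b ∧ c ≠ d ∧ a + b + c + d + e = 0

/-- The colouring set of the disconnected `(2,3)`-pole `M_ev` consisting of an
isolated edge (semiedges `x₁,x₂`) and a single vertex with three dangling
edges (semiedges `a,b,c`). -/
def MevC (x1 x2 a b c : Klein) : Prop :=
  x1 ≠ 0 ∧ x2 ≠ 0 ∧ a ≠ 0 ∧ b ≠ 0 ∧ c ≠ 0 ∧ x1 = x2 ∧ a + b + c = 0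

/-- The colouring set of the `(2,2,2)`-pole `V₄` consisting of a vertex and its
three neighbours, each carrying two dangling edges; the `i`-th connector has
semiedge colours `aᵢ, bᵢ`. -/
def V4C (a1 b1 a2 b2 a3 b3 : Klein) : Prop :=
  a1 ≠ 0 ∧ b1 ≠ 0 ∧ a2 ≠ 0 ∧ b2 ≠ 0 ∧ a3 ≠ 0 ∧ b3 ≠ 0 ∧
    a1 ≠ b1 ∧ a2 ≠ b2 ∧ a3 ≠ b3 ∧ a1 + b1 + a2 + b2 + a3 + b3 = 0

/-- The colouring set of the `(2,2,2)`-pole `TTT(T₁,T₂,T₃)`: the `(3,3,3)`-pole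
`W` consists of one vertex `w` with three dangling edges (colours `w₁,w₂,w₃`,
pairwise distinct by properness at `w`) and three isolated edges (colours
`s₁₂, s₁₃, s₂₃`), each contributing to two different 3-connectors `Dᵢ`; the
connector `Cᵢ` of `Tᵢ` is joined to `Dᵢ`. -/
def TTTcol (T1 T2 T3 : Pred5) (b11 b12 b21 b22 b31 b32 : Klein) : Prop :=
  ∃ w1 w2 w3 s12 s13 s23 : Klein,
    T1 b11 b12 w1 s12 s13 ∧ T2 b21 b22 w2 s12 s23 ∧ T3 b31 b32 w3 s13 s23 ∧
    w1 ≠ w2 ∧ w1 ≠ w3 ∧ w2 ≠ w3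

lemma klein_two : ∀ x : Klein, x + x = 0 := by decide

lemma klein_ne_of_add_ne : ∀ x y : Klein, x + y ≠ 0 → x ≠ y := by decide

lemma klein_add_ne_of_ne : ∀ x y : Klein, x ≠ 0 → y ≠ 0 → x ≠ y → x + y ≠ 0 := by decide

lemma klein_sum3 : ∀ x y z : Klein, x ≠ 0 → y ≠ 0 → z ≠ 0 → x ≠ y → x ≠ z → y ≠ z →
    x + y + z = 0 := by decide

lemma klein_distinct3 : ∀ x y z : Klein, x ≠ 0 → y ≠ 0 → z ≠ 0 → x + y + z = 0 →
    x ≠ y ∧ x ≠ z ∧ y ≠ z := by decide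


/-- **Proper (2,2,2)-poles of type TTT.**  If `T₁, T₂, T₃` are proper
`(2,3)`-poles then `Col(TTT(T₁,T₂,T₃)) ⊆ Col(V₄)`; if all three are perfect
then `Col(TTT(T₁,T₂,T₃)) = Col(V₄)`.  In particular `TTT(T₁,T₂,T₃)` is a
proper `(2,2,2)`-pole (the conditions `aᵢ ≠ bᵢ` in `V4C` say exactly that the
flow through each 2-connector is nonzero). -/
theorem ttt_pole (T1 T2 T3 : Pred5)
    (h1 : IsProper23 T1) (h2 : IsProper23 T2) (h3 : IsProper23 T3) :
    (∀ b11 b12 b21 b22 b31 b32, TTTcol T1 T2 T3 b11 b12 b21 b22 b31 b32 →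
       V4C b11 b12 b21 b22 b31 b32) ∧
    (IsPerfect23 T1 → IsPerfect23 T2 → IsPerfect23 T3 →
       ∀ b11 b12 b21 b22 b31 b32,
         TTTcol T1 T2 T3 b11 b12 b21 b22 b31 b32 ↔ V4C b11 b12 b21 b22 b31 b32) := by
  have fwd : ∀ b11 b12 b21 b22 b31 b32, TTTcol T1 T2 T3 b11 b12 b21 b22 b31 b32 →
      V4C b11 b12 b21 b22 b31 b32 := by
    rintro b11 b12 b21 b22 b31 b32 ⟨w1, w2, w3, s12, s13, s23, hT1, hT2, hT3, d12, d13, d23⟩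
    obtain ⟨hb11, hb12, hw1, hs12, hs13, he1, hn1⟩ := h1 _ _ _ _ _ hT1
    obtain ⟨hb21, hb22, hw2, hs12', hs23, he2, hn2⟩ := h2 _ _ _ _ _ hT2
    obtain ⟨hb31, hb32, hw3, hs13', hs23', he3, hn3⟩ := h3 _ _ _ _ _ hT3
    refine ⟨hb11, hb12, hb21, hb22, hb31, hb32,
      klein_ne_of_add_ne _ _ hn1, klein_ne_of_add_ne _ _ hn2, klein_ne_of_add_ne _ _ hn3, ?_⟩
    have hw : w1 + w2 + w3 = 0 := klein_sum3 w1 w2 w3 hw1 hw2 hw3 d12 d13 d23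
    have e : b11 + b12 + b21 + b22 + b31 + b32
        = (b11 + b12) + (b21 + b22) + (b31 + b32) := by ring
    rw [e, he1, he2, he3]
    have e2 : (w1 + s12 + s13) + (w2 + s12 + s23) + (w3 + s13 + s23)
        = (w1 + w2 + w3) + (s12 + s12) + (s13 + s13) + (s23 + s23) := by ring
    rw [e2, hw, klein_two s12, klein_two s13, klein_two s23]
    simp
  refine ⟨fwd, ?_⟩
  intro p1 p2 p3 b11 b12 b21 b22 b31 b32
  constructor
  · exact fwd _ _ _ _ _ _
  · rintro ⟨hb11, hb12, hb21, hb22, hb31, hb32, hne1, hne2, hne3, hsum⟩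
    set f1 := b11 + b12 with hf1
    set f2 := b21 + b22 with hf2
    set f3 := b31 + b32 with hf3
    have hf1n : f1 ≠ 0 := klein_add_ne_of_ne _ _ hb11 hb12 hne1
    have hf2n : f2 ≠ 0 := klein_add_ne_of_ne _ _ hb21 hb22 hne2
    have hf3n : f3 ≠ 0 := klein_add_ne_of_ne _ _ hb31 hb32 hne3
    have hfs : f1 + f2 + f3 = 0 := by
      rw [hf1, hf2, hf3]
      calc b11 + b12 + (b21 + b22) + (b31 + b32)
          = b11 + b12 + b21 + b22 + b31 + b32 := by ring
        _ = 0 := hsum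
    obtain ⟨g12, g13, g23⟩ := klein_distinct3 f1 f2 f3 hf1n hf2n hf3n hfs
    have hone : ((1 : ZMod 2), (0 : ZMod 2)) ≠ (0 : Klein) := by decide
    have hsq : ∀ f : Klein, f + ((1 : ZMod 2), (0 : ZMod 2)) + ((1 : ZMod 2), (0 : ZMod 2))
        = f := by decide
    refine ⟨f1, f2, f3, ((1 : ZMod 2), (0 : ZMod 2)), ((1 : ZMod 2), (0 : ZMod 2)),
      ((1 : ZMod 2), (0 : ZMod 2)), ?_, ?_, ?_, g12, g13, g23⟩
    · exact (p1 _ _ _ _ _).2 ⟨hb11, hb12, hf1n, hone, hone, by rw [hsq f1], hf1n⟩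
    · exact (p2 _ _ _ _ _).2 ⟨hb21, hb22, hf2n, hone, hone, by rw [hsq f2], hf2n⟩
    · exact (p3 _ _ _ _ _).2 ⟨hb31, hb32, hf3n, hone, hone, by rw [hsq f3], hf3n⟩
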